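/- arXiv:1206.2829 — 2 statements merged into one kernel-verified Lean document; each statement's English description precedes it below -/
import Mathlib

section
/- Fix real τ > 0, a natural number n, and real numbers H and R. For N > 0 set ĝ₀₀(N) = N/(2τ³) + R/τ − (n+1)/(2τ²) and σ(N) = √(1/τ + H²/(τ²·ĝ₀₀(N))). Then, as N → ∞, H·N/(2τ³·ĝ₀₀(N)·σ(N)) converges to H·√τ; equivalently, the derivative of the canonical shrinking soliton potential in the direction of the space-time unit normal, ν^Σ f̂ = −H·N/(2τ³·ĝ₀₀(N)·σ(N)), converges to −H·√τ. -/
/-!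
Since `ĝ₀₀(N)` is affine in `N` with slope `1/(2τ³)`, the ratio `N / (2τ³·ĝ₀₀(N))` tends to `1`,
while `H²/(τ²·ĝ₀₀(N)) → 0` forces `σ(N) → 1/√τ`; the limit is therefore `H·√τ`.
-/

open Filter Topology

lemma tendsto_div_add_const_atTop (b : ℝ) :
    Tendsto (fun x : ℝ => x / (x + b)) atTop (𝓝 1) := by
  have h : Tendsto (fun x : ℝ => 1 + b * x⁻¹) atTop (𝓝 1) := by
    simpa using (tendsto_inv_atTop_zero.const_mul b).const_add 1
  have h' : Tendsto (fun x : ℝ => (1 + b * x⁻¹)⁻¹) atTop (𝓝 1) := by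
    simpa using h.inv₀ one_ne_zero
  refine h'.congr' ?_
  filter_upwards [eventually_ne_atTop 0] with x hx
  field_simp

lemma tendsto_div_mul_div_add_const_atTop {k : ℝ} (hk : k ≠ 0) (c : ℝ) :
    Tendsto (fun x : ℝ => x / (k * (x / k + c))) atTop (𝓝 1) := by
  refine (tendsto_div_add_const_atTop (k * c)).congr fun x => ?_
  rw [mul_add, mul_div_cancel₀ x hk]

lemma tendsto_sqrt_add_div_atTop {α : Type*} {l : Filter α} {g : α → ℝ}
    (hg : Tendsto g l atTop) (a b : ℝ) :
    Tendsto (fun x => Real.sqrt (a + b / g x)) l (𝓝 (Real.sqrt a)) := by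
  have h : Tendsto (fun x => a + b / g x) l (𝓝 (a + 0)) :=
    tendsto_const_nhds.add (tendsto_const_nhds.div_atTop hg)
  rw [add_zero] at h
  exact (Real.continuous_sqrt.tendsto a).comp h

theorem tendsto_mul_div_affine_mul_sqrt {τ : ℝ} (hτ : 0 < τ) (H c : ℝ) :
    Tendsto
      (fun N : ℝ =>
        H * N / (2 * τ ^ 3 * (N / (2 * τ ^ 3) + c) *
          Real.sqrt (1 / τ + H ^ 2 / (τ ^ 2 * (N / (2 * τ ^ 3) + c)))))
      atTop (𝓝 (H * Real.sqrt τ)) := by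
  have hk : (0 : ℝ) < 2 * τ ^ 3 := by positivity
  have hg : Tendsto (fun N : ℝ => τ ^ 2 * (N / (2 * τ ^ 3) + c)) atTop atTop :=
    ((tendsto_id.atTop_div_const hk).atTop_add tendsto_const_nhds).const_mul_atTop (by positivity)
  have hσ := (tendsto_sqrt_add_div_atTop hg (1 / τ) (H ^ 2)).inv₀ (by positivity)
  have h := ((tendsto_div_mul_div_add_const_atTop hk.ne' c).const_mul H).mul hσ
  have hσ_lim : (Real.sqrt (1 / τ))⁻¹ = Real.sqrt τ := by
    rw [one_div, Real.sqrt_inv, inv_inv]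
  rw [mul_one, hσ_lim] at h
  exact h.congr fun N => by simp only [div_eq_mul_inv, mul_inv]; ring

/-- For the canonical shrinking Ricci soliton with time-time component
`ĝ₀₀(N) = N/(2τ³) + R/τ − (n+1)/(2τ²)`, potential `f̂ = N/(2τ)` and normal
normalizing factor `σ(N) = √(1/τ + H²/(τ²·ĝ₀₀(N)))`, the quantity
`H·N/(2τ³·ĝ₀₀(N)·σ(N))` converges to `H·√τ` as `N → ∞`; equivalently the
normal derivative of the potential `ν^Σ f̂ = −H·N/(2τ³·ĝ₀₀(N)·σ(N))` converges
to `−H·√τ`. -/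
theorem stmt_10 (τ : ℝ) (hτ : 0 < τ) (n : ℕ) (H R : ℝ) :
    Tendsto
      (fun N : ℝ =>
        H * N / (2 * τ ^ 3 * (N / (2 * τ ^ 3) + R / τ - ((n : ℝ) + 1) / (2 * τ ^ 2)) *
          Real.sqrt (1 / τ +
            H ^ 2 / (τ ^ 2 * (N / (2 * τ ^ 3) + R / τ - ((n : ℝ) + 1) / (2 * τ ^ 2))))))
      atTop (𝓝 (H * Real.sqrt τ)) ∧
    Tendsto
      (fun N : ℝ =>
        -(H * N / (2 * τ ^ 3 * (N / (2 * τ ^ 3) + R / τ - ((n : ℝ) + 1) / (2 * τ ^ 2)) *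
          Real.sqrt (1 / τ +
            H ^ 2 / (τ ^ 2 * (N / (2 * τ ^ 3) + R / τ - ((n : ℝ) + 1) / (2 * τ ^ 2)))))))
      atTop (𝓝 (-(H * Real.sqrt τ))) := by
  have h := tendsto_mul_div_affine_mul_sqrt hτ H (R / τ - ((n : ℝ) + 1) / (2 * τ ^ 2))
  simp only [← add_sub_assoc] at h
  exact ⟨h, h.neg⟩
end

section
/- Fix real τ > 0, a natural number n, and real numbers H and R. For N > 0 set ĝ₀₀(N) = N/(2τ³) + R/τ − (n+1)/(2τ²) and σ(N) = √(1/τ + H²/(τ²·ĝ₀₀(N))). Then, as N → ∞, the quantity N·(H/σ(N) − H·N/(2τ³·ĝ₀₀(N)·σ(N))) converges to H·τ^{3/2}·(2τR − (n+1)). In particular the soliton defect Ê(N) = H^Σ + ν^Σ f̂ = H/σ(N) − H·N/(2τ³·ĝ₀₀(N)·σ(N)) satisfies N·|Ê(N)| bounded as N → ∞, which is the scalar core of the statement that the space-time track of the mean curvature flow is an approximate soliton inside the canonical shrinking Ricci soliton (Theorem 3.2). -/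
open Filter Topology

/-! Writing `ĝ₀₀(N) = N / a + c` with `a = 2τ³`, the two terms of `Ê(N)` share the denominator
`a ĝ₀₀(N) σ(N)`, and their numerator `a ĝ₀₀(N) - N = a c` does not depend on `N`. Hence
`N Ê(N) = H c (N / ĝ₀₀(N)) / σ(N) → H c a / √(1/τ)`, since `N / ĝ₀₀(N) → a` and `σ(N) → √(1/τ)`. -/

section AffineDenominator

variable {a c : ℝ} {g : ℝ → ℝ}

theorem tendsto_div_of_affine (ha : a ≠ 0) (hg : ∀ x, g x = x / a + c) :
    Tendsto (fun x => x / g x) atTop (𝓝 a) := by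
  have hratio : Tendsto (fun x => g x / x) atTop (𝓝 a⁻¹) := by
    have hlim : Tendsto (fun x : ℝ => a⁻¹ + c * x⁻¹) atTop (𝓝 (a⁻¹ + c * 0)) :=
      tendsto_const_nhds.add (tendsto_const_nhds.mul tendsto_inv_atTop_zero)
    rw [mul_zero, add_zero] at hlim
    refine hlim.congr' ?_
    filter_upwards [eventually_ne_atTop 0] with x hx
    rw [hg]
    field_simp
  simpa only [inv_div, inv_inv] using hratio.inv₀ (inv_ne_zero ha)

theorem tendsto_inv_of_affine (ha : a ≠ 0) (hg : ∀ x, g x = x / a + c) :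
    Tendsto (fun x => (g x)⁻¹) atTop (𝓝 0) := by
  have hlim := (tendsto_div_of_affine ha hg).mul tendsto_inv_atTop_zero
  rw [mul_zero] at hlim
  refine hlim.congr' ?_
  filter_upwards [eventually_ne_atTop 0] with x hx
  rw [div_mul_eq_mul_div, mul_inv_cancel₀ hx, one_div]

theorem tendsto_sqrt_add_div_of_affine (ha : a ≠ 0) (hg : ∀ x, g x = x / a + c) (b d e : ℝ) :
    Tendsto (fun x => √(b + d / (e * g x))) atTop (𝓝 √b) := by
  have hlim := tendsto_const_nhds (x := b) |>.add
    ((tendsto_inv_of_affine ha hg).const_mul (d / e))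
  rw [mul_zero, add_zero] at hlim
  refine (Real.continuous_sqrt.tendsto b).comp (hlim.congr fun x => ?_)
  ring

theorem mul_sub_div_affine_eq (ha : a ≠ 0) {x : ℝ} (hx : x / a + c ≠ 0) (h s : ℝ) :
    x * (h / s - h * x / (a * (x / a + c) * s)) = h * c * (x / (x / a + c)) / s := by
  rcases eq_or_ne s 0 with rfl | hs
  · simp
  have hx_eq : x = a * (x / a + c - c) := by field_simp; ring
  generalize x / a + c = y at hx hx_eq ⊢
  subst hx_eq
  field_simp
  ring

theorem tendsto_mul_sub_div_of_affine (ha : a ≠ 0) (hg : ∀ x, g x = x / a + c)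
    {s : ℝ → ℝ} {s₀ : ℝ} (hs : Tendsto s atTop (𝓝 s₀)) (hs₀ : s₀ ≠ 0) (h : ℝ) :
    Tendsto (fun x => x * (h / s x - h * x / (a * g x * s x))) atTop (𝓝 (h * c * a / s₀)) := by
  have hdiv := tendsto_div_of_affine ha hg
  refine ((tendsto_const_nhds.mul hdiv).div hs hs₀).congr' ?_
  filter_upwards [hdiv.eventually_ne ha] with x hx
  have hgx : g x ≠ 0 := (div_ne_zero_iff.mp hx).2
  simp only [Pi.div_apply]
  rw [hg] at hgx ⊢
  exact (mul_sub_div_affine_eq ha hgx h (s x)).symm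

end AffineDenominator

theorem exists_eventually_mul_abs_le_of_tendsto {f : ℝ → ℝ} {L : ℝ}
    (h : Tendsto (fun x => x * f x) atTop (𝓝 L)) :
    ∃ C : ℝ, ∀ᶠ x in atTop, x * |f x| ≤ C := by
  refine ⟨|L| + 1, ?_⟩
  filter_upwards [h.abs.eventually (eventually_le_nhds (lt_add_one _)),
    eventually_ge_atTop 0] with x hbound hx
  rwa [abs_mul, abs_of_nonneg hx] at hbound

theorem mul_div_sqrt_one_div_eq_mul_rpow {τ : ℝ} (hτ : 0 < τ) (H R k : ℝ) :
    H * (R / τ - k / (2 * τ ^ 2)) * (2 * τ ^ 3) / √(1 / τ)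
      = H * τ ^ ((3 : ℝ) / 2) * (2 * τ * R - k) := by
  have hrpow : τ ^ ((3 : ℝ) / 2) = τ * √τ := by
    rw [show (3 : ℝ) / 2 = 1 + 1 / 2 by norm_num, Real.rpow_add hτ, Real.rpow_one,
      ← Real.sqrt_eq_rpow]
  rw [one_div, Real.sqrt_inv, hrpow]
  field_simp

/-- Scalar core of Theorem 3.2: with `ĝ₀₀(N) = N/(2τ³) + R/τ − (n+1)/(2τ²)` and
`σ(N) = √(1/τ + H²/(τ²·ĝ₀₀(N)))`, the soliton defect
`Ê(N) = H/σ(N) − H·N/(2τ³·ĝ₀₀(N)·σ(N))` satisfies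
`N·Ê(N) → H·τ^{3/2}·(2τR − (n+1))` as `N → ∞`; in particular `N·|Ê(N)|` is
eventually bounded. -/
theorem stmt_11 (τ : ℝ) (hτ : 0 < τ) (n : ℕ) (H R : ℝ) :
    Tendsto
      (fun N : ℝ =>
        N * (H / Real.sqrt (1 / τ +
              H ^ 2 / (τ ^ 2 * (N / (2 * τ ^ 3) + R / τ - ((n : ℝ) + 1) / (2 * τ ^ 2)))) -
          H * N / (2 * τ ^ 3 * (N / (2 * τ ^ 3) + R / τ - ((n : ℝ) + 1) / (2 * τ ^ 2)) *
            Real.sqrt (1 / τ +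
              H ^ 2 / (τ ^ 2 * (N / (2 * τ ^ 3) + R / τ - ((n : ℝ) + 1) / (2 * τ ^ 2)))))))
      atTop (𝓝 (H * τ ^ ((3 : ℝ) / 2) * (2 * τ * R - ((n : ℝ) + 1)))) ∧
    ∃ C : ℝ, ∀ᶠ N : ℝ in atTop,
      N * |H / Real.sqrt (1 / τ +
              H ^ 2 / (τ ^ 2 * (N / (2 * τ ^ 3) + R / τ - ((n : ℝ) + 1) / (2 * τ ^ 2)))) -
          H * N / (2 * τ ^ 3 * (N / (2 * τ ^ 3) + R / τ - ((n : ℝ) + 1) / (2 * τ ^ 2)) *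
            Real.sqrt (1 / τ +
              H ^ 2 / (τ ^ 2 * (N / (2 * τ ^ 3) + R / τ - ((n : ℝ) + 1) / (2 * τ ^ 2)))))| ≤ C := by
  have ha : (2 * τ ^ 3 : ℝ) ≠ 0 := by positivity
  have hg : ∀ N : ℝ, N / (2 * τ ^ 3) + R / τ - ((n : ℝ) + 1) / (2 * τ ^ 2)
      = N / (2 * τ ^ 3) + (R / τ - ((n : ℝ) + 1) / (2 * τ ^ 2)) := fun N => add_sub_assoc _ _ _
  have hσ := tendsto_sqrt_add_div_of_affine ha hg (1 / τ) (H ^ 2) (τ ^ 2)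
  have hlim := tendsto_mul_sub_div_of_affine ha hg hσ (by positivity) H
  rw [mul_div_sqrt_one_div_eq_mul_rpow hτ] at hlim
  exact ⟨hlim, exists_eventually_mul_abs_le_of_tendsto hlim⟩
end
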